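/- arXiv:2208.09262 — 3 statements merged into one kernel-verified Lean document; each statement's English description precedes it below -/
import Mathlib

section
/- If each process, after entering epoch e at some time in the interval [t, t + 2δ], spends exactly view_duration = Δ + 2δ time in each of the f + 1 views of the epoch, then for every view j of the epoch, all processes are simultaneously in view j for at least Δ time. -/
/-- If every process enters the epoch at a time `s i ∈ [t, t + 2δ]` and spends
exactly `view_duration = Δ + 2δ` in each of the `f + 1` views, then for every
view `j` of the epoch all processes are simultaneously in view `j` for at
least `Δ` time: the intersection of their view-`j` intervals contains the
interval `[t + 2δ + (j-1)·view_duration, t + j·view_duration)`, whose length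
is exactly `Δ`. -/
theorem epoch_views_overlap {ι : Type*} (f : ℕ) (Δ δ t : ℝ)
    (hΔ : 0 < Δ) (hδ : 0 < δ)
    (s : ι → ℝ) (hs : ∀ i, s i ∈ Set.Icc t (t + 2 * δ))
    (j : ℕ) (hj1 : 1 ≤ j) (hj2 : j ≤ f + 1) :
    (Set.Ico (t + 2 * δ + ((j : ℝ) - 1) * (Δ + 2 * δ)) (t + (j : ℝ) * (Δ + 2 * δ))
        ⊆ ⋂ i, Set.Ico (s i + ((j : ℝ) - 1) * (Δ + 2 * δ)) (s i + (j : ℝ) * (Δ + 2 * δ)))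
      ∧ (t + (j : ℝ) * (Δ + 2 * δ)) - (t + 2 * δ + ((j : ℝ) - 1) * (Δ + 2 * δ)) = Δ := by
  constructor
  · intro x hx
    simp only [Set.mem_Ico] at hx
    simp only [Set.mem_iInter, Set.mem_Ico]
    intro i
    obtain ⟨h1, h2⟩ := hs i
    constructor <;> nlinarith [hx.1, hx.2]
  · ring
end

section
/- In the certification phase with n = 3f + 1 processes and at most f Byzantine: if all correct processes propose the same value v, then no set of f + 1 processes all of which disclosed a value v' ≠ v can exist, and no correct process ever sends an allow-any message; hence no certificate for any value other than v can be formed. -/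
lemma exists_correct_in_big {P : Type*} [DecidableEq P]
    (f : ℕ) (F D : Finset P) (hFcard : F.card ≤ f) (hD : f + 1 ≤ D.card) :
    ∃ p ∈ D, p ∉ F := by
  by_contra h
  push_neg at h
  have : D ⊆ F := h
  have := Finset.card_le_card this
  omega

/-- Certification phase: with `n = 3f + 1` processes, a faulty set `F` of at
most `f` processes, where every correct process discloses the common value `v`,
and a correct process signs allow-any only if it received some set of `2f + 1`
disclosures in which no value appears `f + 1` times, then:
(a) there is no set of at least `f + 1` processes all disclosing a value
`v' ≠ v` (so no certificate for `v' ≠ v` exists);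
(b) no correct process signs allow-any;
(c) there is no set of at least `f + 1` allow-any signers
(so no allow-any certificate exists). -/
theorem certification_computability {P V : Type*} [DecidableEq P] [DecidableEq V]
    (f : ℕ) (procs F : Finset P)
    (hn : procs.card = 3 * f + 1)
    (hF : F ⊆ procs) (hFcard : F.card ≤ f)
    (v : V) (disclose : P → V)
    (h_correct_disclose : ∀ p ∈ procs, p ∉ F → disclose p = v)
    (allowAnySign : P → Prop)
    (h_allow : ∀ p ∈ procs, p ∉ F → allowAnySign p →
      ∃ S ⊆ procs, S.card = 2 * f + 1 ∧
        ∀ w : V, (S.filter (fun q => disclose q = w)).card < f + 1) :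
    (∀ v' : V, v' ≠ v →
        ¬ ∃ D ⊆ procs, f + 1 ≤ D.card ∧ ∀ p ∈ D, disclose p = v')
    ∧ (∀ p ∈ procs, p ∉ F → ¬ allowAnySign p)
    ∧ ¬ ∃ A ⊆ procs, f + 1 ≤ A.card ∧ ∀ p ∈ A, allowAnySign p := by
  have hb : ∀ p ∈ procs, p ∉ F → ¬ allowAnySign p := by
    intro p hp hpF hsig
    obtain ⟨S, hS, hScard, hno⟩ := h_allow p hp hpF hsig
    have hsub : S \ F ⊆ S.filter (fun q => disclose q = v) := by
      intro q hq
      rw [Finset.mem_sdiff] at hq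
      exact Finset.mem_filter.2 ⟨hq.1, h_correct_disclose q (hS hq.1) hq.2⟩
    have h1 : S.card - F.card ≤ (S \ F).card := Finset.le_card_sdiff F S
    have h2 := Finset.card_le_card hsub
    have h3 := hno v
    omega
  refine ⟨?_, hb, ?_⟩
  · rintro v' hne ⟨D, hD, hDcard, hall⟩
    obtain ⟨p, hpD, hpF⟩ := exists_correct_in_big f F D hFcard hDcard
    exact hne ((hall p hpD).symm.trans (h_correct_disclose p (hD hpD) hpF))
  · rintro ⟨A, hA, hAcard, hall⟩
    obtain ⟨p, hpA, hpF⟩ := exists_correct_in_big f F A hFcard hAcard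
    exact hb p (hA hpA) hpF (hall p hpA)
end

section
/- If f + 1 correct processes are locked on value v at view w (i.e., refuse to support any prepare certificate for a different value from a view ≤ w), then no prepare quorum certificate for a value v' ≠ v formed in a view > w using only certificates from views ≤ w can gather 2f + 1 votes. -/
/-- Locking: if a set `L` of at least `f + 1` correct processes is locked on
value `v` at view `w` — i.e. each process in `L` votes for a certificate with
value `x` and justification view `wj` only if `x = v` or `wj > w` — then no
prepare quorum certificate for a value `v' ≠ v` justified from a view
`wj ≤ w` can gather `2f + 1` votes out of the `n = 3f + 1` processes. -/
theorem locked_value_blocks_conflicting_qc {P V : Type*} [DecidableEq P]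
    (f : ℕ) (procs F L : Finset P)
    (hn : procs.card = 3 * f + 1)
    (hF : F ⊆ procs) (hFcard : F.card ≤ f)
    (hL : L ⊆ procs) (hLcorrect : ∀ p ∈ L, p ∉ F) (hLcard : f + 1 ≤ L.card)
    (v v' : V) (w wj : ℕ)
    (vote : P → Prop)  -- `vote p` : `p` votes for the certificate `(v', wj)`
    (hLocked : ∀ p ∈ L, vote p → (v' = v ∨ w < wj))
    (hconflict : v' ≠ v) (hjust : wj ≤ w)
    (Q : Finset P) (hQ : Q ⊆ procs) (hQcard : 2 * f + 1 ≤ Q.card)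
    (hQvote : ∀ p ∈ Q, vote p) :
    False := by
  have hinter : (L ∩ Q).Nonempty := by
    rw [← Finset.card_pos]
    have h1 : L.card + Q.card ≤ (L ∪ Q).card + (L ∩ Q).card :=
      le_of_eq (Finset.card_union_add_card_inter L Q).symm
    have h2 : (L ∪ Q).card ≤ procs.card :=
      Finset.card_le_card (Finset.union_subset hL hQ)
    omega
  obtain ⟨p, hp⟩ := hinter
  rw [Finset.mem_inter] at hp
  rcases hLocked p hp.1 (hQvote p hp.2) with h | h
  · exact hconflict h
  · omega
end
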